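/- arXiv:2209.09296 — 2 statements merged into one kernel-verified Lean document; each statement's English description precedes it below -/
import Mathlib

section
/- Let a > 0, u ∈ ℝ, v(u) = a/2 + u, and define G(u) = Φ(v(u)) / V(1, e^{a u}) where V(1, e^{a u}) = Φ(v(u)) + e^{-a u} Φ(v(-u)). Then G is a cumulative distribution function on ℝ (nondecreasing, right-continuous, with limits 0 at −∞ and 1 at +∞), and as a → 0, G(u) → Φ(u) pointwise for every u ∈ ℝ. -/
open Real Set Filter

/-- The standard Gaussian cumulative distribution function. -/
noncomputable def Phi (x : ℝ) : ℝ :=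
  ∫ t in Set.Iic x, Real.exp (-t ^ 2 / 2) / Real.sqrt (2 * Real.pi)

/-- Marginal distribution function of the normalized increment
`U = (σ d^{α/2})⁻¹ log (η(x₂)/η(x₁))` of a Brown-Resnick field, with `a = σ d^{α/2}`. -/
noncomputable def G (a u : ℝ) : ℝ :=
  Phi (a / 2 + u) / (Phi (a / 2 + u) + Real.exp (-(a * u)) * Phi (a / 2 - u))

/-!
`Phi` is the distribution function of the standard Gaussian measure, so it is monotone, tends to
`0` and `1` at `∓∞`, is continuous (no atoms), positive (the measure charges every half-line) and
satisfies `Phi (-x) = 1 - Phi x` (symmetry). Write `G a u = Phi (a/2 + u) / V a u`. For `a ≥ 0` the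
numerator increases and the second summand of `V a u` decreases in `u`, so `G a` is monotone; for
`a > 0`, `V a u → ∞` as `u → -∞` while `G a u ≤ 1 / V a u`, and `V a u → 1` as `u → ∞`. Finally `G`
is jointly continuous and `G 0 u = Phi u / (Phi u + Phi (-u)) = Phi u`.
-/

open MeasureTheory ProbabilityTheory Topology

namespace ProbabilityTheory

variable (μ : Measure ℝ) [IsProbabilityMeasure μ]

lemma continuous_cdf [NullSingletonClass μ] : Continuous (cdf μ) := by
  -- the left jump of `cdf μ` at `x` is `μ {x}`
  refine continuous_iff_continuousAt.2 fun x ↦ continuousAt_iff_continuous_left'_right'.2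
    ⟨?_, continuousWithinAt_Ioi_iff_Ici.2 ((cdf μ).right_continuous x)⟩
  refine ((monotone_cdf μ).continuousWithinAt_Iio_iff_leftLim_eq).2 ?_
  have hatom : ENNReal.ofReal (cdf μ x - Function.leftLim (cdf μ) x) = 0 := by
    rw [← StieltjesFunction.measure_singleton, measure_cdf, measure_singleton]
  have := (monotone_cdf μ).leftLim_le (le_refl x)
  linarith [ENNReal.ofReal_eq_zero.1 hatom]

lemma cdf_neg_of_map_neg_eq [NullSingletonClass μ] (hμ : μ.map (fun x ↦ -x) = μ) (x : ℝ) :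
    cdf μ (-x) = 1 - cdf μ x := by
  rw [cdf_eq_real, cdf_eq_real]
  calc μ.real (Iic (-x)) = (μ.map (fun x ↦ -x)).real (Iic (-x)) := by rw [hμ]
    _ = μ.real (Ioi x) := by
      rw [map_measureReal_apply measurable_neg measurableSet_Iic, Set.neg_preimage, Set.neg_Iic,
        neg_neg, measureReal_congr Ioi_ae_eq_Ici]
    _ = 1 - μ.real (Iic x) := by rw [← compl_Iic, probReal_compl_eq_one_sub measurableSet_Iic]

lemma cdf_pos (hμ : volume ≪ μ) (x : ℝ) : 0 < cdf μ x := by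
  rw [cdf_eq_real]
  exact ENNReal.toReal_pos (fun h ↦ by simpa using hμ h) (measure_ne_top _ _)

end ProbabilityTheory

lemma gaussianPDFReal_zero_one (t : ℝ) :
    gaussianPDFReal 0 1 t = Real.exp (-t ^ 2 / 2) / Real.sqrt (2 * Real.pi) := by
  simp [gaussianPDFReal, div_eq_inv_mul]

lemma Phi_eq_cdf_gaussianReal : Phi = cdf (gaussianReal 0 1) := by
  ext x
  rw [cdf_eq_real, measureReal_def, gaussianReal_apply_eq_integral _ one_ne_zero,
    ENNReal.toReal_ofReal (setIntegral_nonneg measurableSet_Iic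
      fun t _ ↦ gaussianPDFReal_nonneg 0 1 t)]
  simp only [gaussianPDFReal_zero_one, Phi]

lemma monotone_Phi : Monotone Phi := Phi_eq_cdf_gaussianReal ▸ monotone_cdf _

@[fun_prop]
lemma continuous_Phi : Continuous Phi := by
  have := nullSingletonClass_gaussianReal (μ := 0) one_ne_zero
  exact Phi_eq_cdf_gaussianReal ▸ continuous_cdf _

lemma Phi_pos (x : ℝ) : 0 < Phi x :=
  Phi_eq_cdf_gaussianReal ▸ cdf_pos _ (gaussianReal_absolutelyContinuous' 0 one_ne_zero) x

lemma Phi_le_one (x : ℝ) : Phi x ≤ 1 := Phi_eq_cdf_gaussianReal ▸ cdf_le_one _ x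

lemma Phi_neg (x : ℝ) : Phi (-x) = 1 - Phi x := by
  have := nullSingletonClass_gaussianReal (μ := 0) one_ne_zero
  rw [Phi_eq_cdf_gaussianReal]
  exact cdf_neg_of_map_neg_eq _ (by simpa using gaussianReal_map_neg (μ := 0) (v := 1)) x

lemma tendsto_Phi_atBot : Tendsto Phi atBot (𝓝 0) :=
  Phi_eq_cdf_gaussianReal ▸ tendsto_cdf_atBot _

lemma tendsto_Phi_atTop : Tendsto Phi atTop (𝓝 1) :=
  Phi_eq_cdf_gaussianReal ▸ tendsto_cdf_atTop _

/-- The paper's `V(1, e^{a u})`. -/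
noncomputable def V (a u : ℝ) : ℝ := Phi (a / 2 + u) + exp (-(a * u)) * Phi (a / 2 - u)

lemma G_eq_div_V (a u : ℝ) : G a u = Phi (a / 2 + u) / V a u := rfl

lemma V_pos (a u : ℝ) : 0 < V a u := by
  have := Phi_pos (a / 2 + u)
  have := Phi_pos (a / 2 - u)
  unfold V
  positivity

lemma continuous_G : Continuous (Function.uncurry G) := by
  have hV : Continuous (Function.uncurry V) := by unfold V; fun_prop
  exact (continuous_Phi.comp (by fun_prop)).div hV fun p ↦ (V_pos p.1 p.2).ne'

lemma G_zero (u : ℝ) : G 0 u = Phi u := by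
  simp [G, Phi_neg]

lemma monotone_G {a : ℝ} (ha : 0 ≤ a) : Monotone (G a) := by
  intro u w huw
  have hnum : Phi (a / 2 + u) ≤ Phi (a / 2 + w) := monotone_Phi (by linarith)
  have htail : exp (-(a * w)) * Phi (a / 2 - w) ≤ exp (-(a * u)) * Phi (a / 2 - u) :=
    mul_le_mul (exp_le_exp.2 (by nlinarith)) (monotone_Phi (by linarith)) (Phi_pos _).le
      (exp_pos _).le
  rw [G_eq_div_V, G_eq_div_V, div_le_div_iff₀ (V_pos a u) (V_pos a w), V, V]
  nlinarith [Phi_pos (a / 2 + u), mul_pos (exp_pos (-(a * w))) (Phi_pos (a / 2 - w))]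

lemma tendsto_V_atBot {a : ℝ} (ha : 0 < a) : Tendsto (V a) atBot atTop := by
  have hnum : Tendsto (fun u ↦ Phi (a / 2 + u)) atBot (𝓝 0) :=
    tendsto_Phi_atBot.comp (tendsto_atBot_add_const_left _ _ tendsto_id)
  have hexp : Tendsto (fun u ↦ exp (-(a * u))) atBot atTop :=
    tendsto_exp_atTop.comp (tendsto_neg_atBot_atTop.comp (tendsto_id.const_mul_atBot ha))
  have htail : Tendsto (fun u ↦ Phi (a / 2 - u)) atBot (𝓝 1) := by
    simp_rw [sub_eq_add_neg]
    exact tendsto_Phi_atTop.comp (tendsto_atTop_add_const_left _ _ tendsto_neg_atBot_atTop)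
  exact hnum.add_atTop (hexp.atTop_mul_pos one_pos htail)

lemma tendsto_G_atBot {a : ℝ} (ha : 0 < a) : Tendsto (G a) atBot (𝓝 0) := by
  refine squeeze_zero (fun u ↦ (div_pos (Phi_pos _) (V_pos a u)).le) (fun u ↦ ?_)
    (tendsto_V_atBot ha).inv_tendsto_atTop
  rw [G_eq_div_V, div_eq_mul_inv]
  exact mul_le_of_le_one_left (inv_nonneg.2 (V_pos a u).le) (Phi_le_one _)

lemma tendsto_V_atTop {a : ℝ} (ha : 0 < a) : Tendsto (V a) atTop (𝓝 1) := by
  have hnum : Tendsto (fun u ↦ Phi (a / 2 + u)) atTop (𝓝 1) :=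
    tendsto_Phi_atTop.comp (tendsto_atTop_add_const_left _ _ tendsto_id)
  have hexp : Tendsto (fun u ↦ exp (-(a * u))) atTop (𝓝 0) :=
    tendsto_exp_atBot.comp (tendsto_neg_atTop_atBot.comp (tendsto_id.const_mul_atTop ha))
  have htail : Tendsto (fun u ↦ Phi (a / 2 - u)) atTop (𝓝 0) := by
    simp_rw [sub_eq_add_neg]
    exact tendsto_Phi_atBot.comp (tendsto_atBot_add_const_left _ _ tendsto_neg_atTop_atBot)
  have hV := hnum.add (hexp.mul htail)
  rwa [zero_mul, add_zero] at hV

lemma tendsto_G_atTop {a : ℝ} (ha : 0 < a) : Tendsto (G a) atTop (𝓝 1) := by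
  have hnum : Tendsto (fun u ↦ Phi (a / 2 + u)) atTop (𝓝 1) :=
    tendsto_Phi_atTop.comp (tendsto_atTop_add_const_left _ _ tendsto_id)
  have hG := hnum.div (tendsto_V_atTop ha) one_ne_zero
  rwa [div_one] at hG

/-- `G a` is a cumulative distribution function (nondecreasing,
right-continuous, with limits 0 at -∞ and 1 at +∞), and `G a u → Φ(u)` as `a → 0⁺`. -/
theorem increment_marginal_is_cdf_and_gaussian_limit :
    (∀ a : ℝ, 0 < a →
        Monotone (G a)
        ∧ (∀ u : ℝ, ContinuousWithinAt (G a) (Set.Ici u) u)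
        ∧ Filter.Tendsto (G a) Filter.atBot (nhds 0)
        ∧ Filter.Tendsto (G a) Filter.atTop (nhds 1))
      ∧ ∀ u : ℝ,
        Filter.Tendsto (fun a : ℝ => G a u) (nhdsWithin 0 (Set.Ioi 0)) (nhds (Phi u)) := by
  refine ⟨fun a ha ↦ ⟨monotone_G ha.le, fun u ↦ ?_, tendsto_G_atBot ha, tendsto_G_atTop ha⟩,
    fun u ↦ ?_⟩
  · exact (continuous_G.comp (Continuous.prodMk_right a)).continuousWithinAt
  · have hG : Tendsto (fun a ↦ G a u) (𝓝 0) (𝓝 (G 0 u)) :=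
      (continuous_G.comp (Continuous.prodMk_left u)).tendsto 0
    rw [G_zero] at hG
    exact hG.mono_left nhdsWithin_le_nhds
end

section
/- Let x₁, x₂, x₃ ∈ ℝ² be three distinct points with pairwise distances d_{12} = ‖x₂−x₁‖, d_{13} = ‖x₃−x₁‖, d_{23} = ‖x₃−x₂‖, and let α ∈ (0,2]. Then R₁ = (d_{12}^α + d_{13}^α − d_{23}^α)/(2 (d_{12} d_{13})^{α/2}) satisfies −1 < R₁ < 1 whenever the three points are not collinear, and |R₁| ≤ 1 in general. -/
open Real Set

/-! For `0 < β ≤ 1` the power `dist ^ β` is again a metric (the `β`-snowflake of the distance).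
With `β = α / 2`, the coefficient is `(A² + B² - C²) / (2AB)` for the snowflaked side lengths
`A = d₁₂^β`, `B = d₁₃^β`, `C = d₂₃^β`, i.e. the cosine of the angle opposite `C` in a triangle
with these sides, so it lies in `[-1, 1]`. If the points are not collinear, all triangle
inequalities between the Euclidean distances are strict (the plane is strictly convex), hence
so are those between the snowflaked ones, and the cosine lies in `(-1, 1)`. -/

lemma abs_law_of_cosines_le_one {A B C : ℝ} (hA : 0 < A) (hB : 0 < B)
    (hCA : C ≤ A + B) (hAB : A ≤ B + C) (hBA : B ≤ A + C) :
    |(A ^ 2 + B ^ 2 - C ^ 2) / (2 * (A * B))| ≤ 1 := by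
  have hden : 0 < 2 * (A * B) := by positivity
  rw [abs_div, abs_of_pos hden, div_le_one hden, abs_le]
  constructor <;> nlinarith

lemma abs_law_of_cosines_lt_one {A B C : ℝ}
    (hCA : C < A + B) (hAB : A < B + C) (hBA : B < A + C) :
    |(A ^ 2 + B ^ 2 - C ^ 2) / (2 * (A * B))| < 1 := by
  have hden : 0 < 2 * (A * B) := by
    have hA : 0 < A := by linarith
    have hB : 0 < B := by linarith
    positivity
  rw [abs_div, abs_of_pos hden, div_lt_one hden, abs_lt]
  constructor <;> nlinarith

section Snowflake

variable {X : Type*} [PseudoMetricSpace X] {p : ℝ}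

lemma dist_rpow_le_add (x y z : X) (hp₀ : 0 ≤ p) (hp₁ : p ≤ 1) :
    dist x z ^ p ≤ dist x y ^ p + dist y z ^ p :=
  (rpow_le_rpow dist_nonneg (dist_triangle x y z) hp₀).trans
    (rpow_add_le_add_rpow dist_nonneg dist_nonneg hp₀ hp₁)

lemma dist_rpow_lt_add {x y z : X} (hp₀ : 0 < p) (hp₁ : p ≤ 1)
    (h : dist x z < dist x y + dist y z) :
    dist x z ^ p < dist x y ^ p + dist y z ^ p :=
  (rpow_lt_rpow dist_nonneg h hp₀).trans_le
    (rpow_add_le_add_rpow dist_nonneg dist_nonneg hp₀.le hp₁)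

end Snowflake

section IncrementCorrelation

variable {X : Type*} [MetricSpace X]

/-- The correlation coefficient `R₁` of the normalized increments `W(x₂) - W(x₁)` and
`W(x₃) - W(x₁)` of a field with semivariogram proportional to `dist ^ α`. -/
noncomputable def incrementCorrelation (α : ℝ) (x₁ x₂ x₃ : X) : ℝ :=
  (dist x₁ x₂ ^ α + dist x₁ x₃ ^ α - dist x₂ x₃ ^ α) / (2 * (dist x₁ x₂ * dist x₁ x₃) ^ (α / 2))

lemma incrementCorrelation_eq_law_of_cosines (α : ℝ) (x₁ x₂ x₃ : X) :
    incrementCorrelation α x₁ x₂ x₃ =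
      ((dist x₁ x₂ ^ (α / 2)) ^ 2 + (dist x₁ x₃ ^ (α / 2)) ^ 2 - (dist x₂ x₃ ^ (α / 2)) ^ 2)
        / (2 * (dist x₁ x₂ ^ (α / 2) * dist x₁ x₃ ^ (α / 2))) := by
  have hsq : ∀ d : ℝ, 0 ≤ d → d ^ α = (d ^ (α / 2)) ^ 2 := fun d hd => by
    rw [← rpow_mul_natCast hd]
    norm_num
  rw [incrementCorrelation, mul_rpow dist_nonneg dist_nonneg,
    hsq _ dist_nonneg, hsq (dist x₁ x₃) dist_nonneg, hsq (dist x₂ x₃) dist_nonneg]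

lemma abs_incrementCorrelation_le_one {α : ℝ} (hα₀ : 0 ≤ α) (hα₂ : α ≤ 2)
    {x₁ x₂ x₃ : X} (h12 : x₁ ≠ x₂) (h13 : x₁ ≠ x₃) :
    |incrementCorrelation α x₁ x₂ x₃| ≤ 1 := by
  have hβ₀ : 0 ≤ α / 2 := by linarith
  have hβ₁ : α / 2 ≤ 1 := by linarith
  rw [incrementCorrelation_eq_law_of_cosines]
  refine abs_law_of_cosines_le_one (rpow_pos_of_pos (dist_pos.2 h12) _)
    (rpow_pos_of_pos (dist_pos.2 h13) _) ?_ ?_ ?_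
  · simpa only [dist_comm x₁ x₂] using dist_rpow_le_add x₂ x₁ x₃ hβ₀ hβ₁
  · simpa only [dist_comm x₃ x₂] using dist_rpow_le_add x₁ x₃ x₂ hβ₀ hβ₁
  · simpa only [add_comm] using dist_rpow_le_add x₁ x₂ x₃ hβ₀ hβ₁

lemma abs_incrementCorrelation_lt_one {α : ℝ} (hα₀ : 0 < α) (hα₂ : α ≤ 2) {x₁ x₂ x₃ : X}
    (h₁ : dist x₂ x₃ < dist x₂ x₁ + dist x₁ x₃) (h₂ : dist x₁ x₂ < dist x₁ x₃ + dist x₃ x₂)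
    (h₃ : dist x₁ x₃ < dist x₁ x₂ + dist x₂ x₃) :
    |incrementCorrelation α x₁ x₂ x₃| < 1 := by
  have hβ₀ : 0 < α / 2 := by linarith
  have hβ₁ : α / 2 ≤ 1 := by linarith
  rw [incrementCorrelation_eq_law_of_cosines]
  refine abs_law_of_cosines_lt_one ?_ ?_ ?_
  · simpa only [dist_comm x₁ x₂] using dist_rpow_lt_add hβ₀ hβ₁ h₁
  · simpa only [dist_comm x₃ x₂] using dist_rpow_lt_add hβ₀ hβ₁ h₂
  · simpa only [add_comm] using dist_rpow_lt_add hβ₀ hβ₁ h₃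

end IncrementCorrelation

lemma dist_lt_dist_add_dist_of_not_collinear {V P : Type*} [NormedAddCommGroup V]
    [NormedSpace ℝ V] [StrictConvexSpace ℝ V] [MetricSpace P] [NormedAddTorsor V P] {a b c : P}
    (h : ¬Collinear ℝ ({a, b, c} : Set P)) :
    dist a c < dist a b + dist b c :=
  (dist_triangle a b c).lt_of_ne fun heq => h (dist_add_dist_eq_iff.1 heq.symm).collinear

theorem correlation_coefficient_bounds_general (x₁ x₂ x₃ : EuclideanSpace ℝ (Fin 2))
    (h12 : x₁ ≠ x₂) (h13 : x₁ ≠ x₃)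
    (α : ℝ) (hα : α ∈ Set.Ioc (0:ℝ) 2) :
    |(dist x₁ x₂ ^ α + dist x₁ x₃ ^ α - dist x₂ x₃ ^ α)
        / (2 * (dist x₁ x₂ * dist x₁ x₃) ^ (α / 2))| ≤ 1
      ∧ (¬ Collinear ℝ ({x₁, x₂, x₃} : Set (EuclideanSpace ℝ (Fin 2))) →
          -1 < (dist x₁ x₂ ^ α + dist x₁ x₃ ^ α - dist x₂ x₃ ^ α)
              / (2 * (dist x₁ x₂ * dist x₁ x₃) ^ (α / 2))
            ∧ (dist x₁ x₂ ^ α + dist x₁ x₃ ^ α - dist x₂ x₃ ^ α)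
              / (2 * (dist x₁ x₂ * dist x₁ x₃) ^ (α / 2)) < 1) := by
  obtain ⟨hα₀, hα₂⟩ := hα
  refine ⟨abs_incrementCorrelation_le_one hα₀.le hα₂ h12 h13, fun hcol => abs_lt.1 ?_⟩
  refine abs_incrementCorrelation_lt_one hα₀ hα₂ (dist_lt_dist_add_dist_of_not_collinear ?_)
    (dist_lt_dist_add_dist_of_not_collinear ?_) (dist_lt_dist_add_dist_of_not_collinear hcol)
  · rwa [insert_comm]
  · rwa [pair_comm]

/-- the coefficient
`R₁ = (d₁₂^α + d₁₃^α - d₂₃^α)/(2 (d₁₂ d₁₃)^{α/2})` for three distinct points of `ℝ²`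
satisfies `|R₁| ≤ 1` in general, and `-1 < R₁ < 1` when the points are not collinear. -/
theorem correlation_coefficient_bounds (x₁ x₂ x₃ : EuclideanSpace ℝ (Fin 2))
    (h12 : x₁ ≠ x₂) (h13 : x₁ ≠ x₃) (h23 : x₂ ≠ x₃)
    (α : ℝ) (hα : α ∈ Set.Ioc (0:ℝ) 2) :
    |(dist x₁ x₂ ^ α + dist x₁ x₃ ^ α - dist x₂ x₃ ^ α)
        / (2 * (dist x₁ x₂ * dist x₁ x₃) ^ (α / 2))| ≤ 1
      ∧ (¬ Collinear ℝ ({x₁, x₂, x₃} : Set (EuclideanSpace ℝ (Fin 2))) →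
          -1 < (dist x₁ x₂ ^ α + dist x₁ x₃ ^ α - dist x₂ x₃ ^ α)
              / (2 * (dist x₁ x₂ * dist x₁ x₃) ^ (α / 2))
            ∧ (dist x₁ x₂ ^ α + dist x₁ x₃ ^ α - dist x₂ x₃ ^ α)
              / (2 * (dist x₁ x₂ * dist x₁ x₃) ^ (α / 2)) < 1) :=
  correlation_coefficient_bounds_general x₁ x₂ x₃ h12 h13 α hα
end
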